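/- Let K ∈ (0,1] and let b ≥ 2 be a real number. Then the function H_{K,b} is increasing on [1/2,1]. -/

import Mathlib

/-- The function `H_{K,b}(x) = (K+2(1−K)(x−1/2))^b / (K+4(1−K)(x−1/2))`. -/
noncomputable def Hfun (K b x : ℝ) : ℝ :=
  (K + 2 * (1 - K) * (x - 1 / 2)) ^ b / (K + 4 * (1 - K) * (x - 1 / 2))

/-- Lemma 3.2(i): if `K ∈ (0,1]` and `b ≥ 2`, then `H_{K,b}` is increasing on `[1/2,1]`. -/
theorem Hfun_monotoneOn (K b : ℝ) (hK : K ∈ Set.Ioc (0 : ℝ) 1) (hb : 2 ≤ b) :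
    MonotoneOn (Hfun K b) (Set.Icc (1 / 2 : ℝ) 1) := by
  obtain ⟨hK0, hK1⟩ := hK
  have h1K : (0:ℝ) ≤ 1 - K := by linarith
  set u : ℝ → ℝ := fun x => K + 2 * (1 - K) * (x - 1 / 2) with hu
  set v : ℝ → ℝ := fun x => K + 4 * (1 - K) * (x - 1 / 2) with hv
  have hupos : ∀ x ∈ Set.Icc (1/2:ℝ) 1, 0 < u x := by
    intro x hx
    have h := mul_nonneg h1K (by linarith [hx.1] : (0:ℝ) ≤ x - 1/2)
    simp only [hu]; nlinarith
  have hvpos : ∀ x ∈ Set.Icc (1/2:ℝ) 1, 0 < v x := by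
    intro x hx
    have h := mul_nonneg h1K (by linarith [hx.1] : (0:ℝ) ≤ x - 1/2)
    simp only [hv]; nlinarith
  have hEq : Hfun K b = fun x => u x ^ b / v x := rfl
  -- derivative at points of the interval
  have hder : ∀ x ∈ Set.Icc (1/2:ℝ) 1, HasDerivAt (Hfun K b)
      (((2 * (1 - K)) * b * u x ^ (b - 1) * v x - u x ^ b * (4 * (1 - K))) / v x ^ 2) x := by
    intro x hx
    have hdu : HasDerivAt u (2 * (1 - K)) x := by
      rw [hu]; simpa using (((hasDerivAt_id x).sub_const (2⁻¹ : ℝ)).const_mul (2 * (1 - K))).const_add K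
    have hdv : HasDerivAt v (4 * (1 - K)) x := by
      rw [hv]; simpa using (((hasDerivAt_id x).sub_const (2⁻¹ : ℝ)).const_mul (4 * (1 - K))).const_add K
    have hdun : HasDerivAt (fun y => u y ^ b) ((2 * (1 - K)) * b * u x ^ (b - 1)) x :=
      hdu.rpow_const (Or.inr (by linarith))
    have := hdun.div hdv (ne_of_gt (hvpos x hx))
    exact this
  have hderiv_nonneg : ∀ x ∈ Set.Icc (1/2:ℝ) 1,
      0 ≤ ((2 * (1 - K)) * b * u x ^ (b - 1) * v x - u x ^ b * (4 * (1 - K))) / v x ^ 2 := by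
    intro x hx
    apply div_nonneg _ (sq_nonneg _)
    have hux := hupos x hx
    have hvx := hvpos x hx
    have hub : u x ^ b = u x ^ (b - 1) * u x := by
      rw [← Real.rpow_add_one (ne_of_gt hux)]
      norm_num
    rw [hub]
    have hpow : (0:ℝ) ≤ u x ^ (b - 1) := Real.rpow_nonneg hux.le _
    have huv : u x ≤ v x := by
      have h := mul_nonneg h1K (by linarith [hx.1] : (0:ℝ) ≤ x - 1/2)
      simp only [hu, hv]; nlinarith
    have hbv : 2 * v x ≤ b * v x := by nlinarith
    nlinarith [mul_nonneg hpow (by nlinarith : (0:ℝ) ≤ b * v x - 2 * u x),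
      mul_nonneg (mul_nonneg h1K hpow) (by nlinarith : (0:ℝ) ≤ b * v x - 2 * u x)]
  apply monotoneOn_of_deriv_nonneg (convex_Icc _ _)
  · exact fun x hx => (hder x hx).continuousAt.continuousWithinAt
  · intro x hx
    rw [interior_Icc] at hx
    exact (hder x (Set.Ioo_subset_Icc_self hx)).differentiableAt.differentiableWithinAt
  · intro x hx
    rw [interior_Icc] at hx
    rw [(hder x (Set.Ioo_subset_Icc_self hx)).deriv]
    exact hderiv_nonneg x (Set.Ioo_subset_Icc_self hx)
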